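/- Let n ≥ 3, let v₁, …, vₙ be nonnegative reals, fix an index i, and let p ∈ ℝ be a price. Let m₁ = max_{k ≠ i} v_k, let j be an index (≠ i) attaining this maximum, let m₂ = max_{k ∉ {i, j}} v_k be the second-highest value among the agents other than i, and let p* = max(p, m₂). Then the welfare of trading i's item at price p* to the highest other bidder is at least the welfare of the bilateral trade at price p against a buyer with value m₁: (if v_i ≤ p* ∧ p* ≤ m₁ then m₁ else v_i) ≥ (if v_i ≤ p ∧ p ≤ m₁ then m₁ else v_i). -/

import Mathlib

/-! Raising the price to `max p m₂` never stops a trade at `p` (as `m₂ ≤ m₁`), and whenever a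
trade does happen the buyer values the item at least as much as the seller. -/

noncomputable def fixedPriceWelfare (s b p : ℝ) : ℝ := if s ≤ p ∧ p ≤ b then b else s

lemma le_fixedPriceWelfare (s b p : ℝ) : s ≤ fixedPriceWelfare s b p := by
  unfold fixedPriceWelfare
  split_ifs with htrade
  exacts [htrade.1.trans htrade.2, le_rfl]

lemma fixedPriceWelfare_le_of_le {s b p q : ℝ} (hpq : p ≤ q) (hqb : q ≤ b) :
    fixedPriceWelfare s b p ≤ fixedPriceWelfare s b q := by
  by_cases htrade : s ≤ p ∧ p ≤ b
  · simp [fixedPriceWelfare, htrade, htrade.1.trans hpq, hqb]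
  · simpa [fixedPriceWelfare, htrade] using le_fixedPriceWelfare s b q

lemma fixedPriceWelfare_le_max {s b p c : ℝ} (hcb : c ≤ b) :
    fixedPriceWelfare s b p ≤ fixedPriceWelfare s b (max p c) := by
  by_cases hpb : p ≤ b
  · exact fixedPriceWelfare_le_of_le (le_max_left p c) (max_le hpb hcb)
  · simp [fixedPriceWelfare, hpb]

/-- Over `ℝ` an empty supremum is `0`, so nonnegativity replaces nonemptiness of the smaller
index set. -/
lemma iSup_subtype_le_iSup_subtype_of_nonneg {ι : Type*} [Finite ι] {f : ι → ℝ} (hf : 0 ≤ f)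
    {P Q : ι → Prop} (hPQ : ∀ k, P k → Q k) :
    ⨆ k : {k // P k}, f k ≤ ⨆ k : {k // Q k}, f k :=
  Real.iSup_le
    (fun k => le_ciSup (f := fun k : {k // Q k} => f k) (Set.finite_range _).bddAbove
      ⟨k, hPQ k k.2⟩)
    (Real.iSup_nonneg fun k => hf k)

theorem second_price_with_reserve_dominates_general
    (n : ℕ) (v : Fin n → ℝ) (hv0 : ∀ k, 0 ≤ v k)
    (i j : Fin n) (p : ℝ) :
    (if v i ≤ max p (⨆ k : {k : Fin n // k ≠ i ∧ k ≠ j}, v k)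
        ∧ max p (⨆ k : {k : Fin n // k ≠ i ∧ k ≠ j}, v k)
            ≤ ⨆ k : {k : Fin n // k ≠ i}, v k
      then ⨆ k : {k : Fin n // k ≠ i}, v k else v i)
    ≥ (if v i ≤ p ∧ p ≤ ⨆ k : {k : Fin n // k ≠ i}, v k
      then ⨆ k : {k : Fin n // k ≠ i}, v k else v i) :=
  fixedPriceWelfare_le_max
    (iSup_subtype_le_iSup_subtype_of_nonneg hv0 fun _ hk => hk.1)

/-- **Second-price auction with reserve dominates the bilateral trade.**
Let `n ≥ 3`, `v` nonnegative values, `i` a fixed index, `p` a price. Let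
`m₁ = max_{k ≠ i} v k`, `j ≠ i` an index attaining this maximum,
`m₂ = max_{k ∉ {i,j}} v k` and `p* = max p m₂`. Then the welfare of trading
`i`'s item at price `p*` to the highest other bidder is at least the welfare
of the bilateral trade at price `p` against a buyer of value `m₁`. -/
theorem second_price_with_reserve_dominates
    (n : ℕ) (hn : 3 ≤ n) (v : Fin n → ℝ) (hv0 : ∀ k, 0 ≤ v k)
    (i j : Fin n) (p : ℝ) (hji : j ≠ i)
    (hj : v j = ⨆ k : {k : Fin n // k ≠ i}, v k) :
    (if v i ≤ max p (⨆ k : {k : Fin n // k ≠ i ∧ k ≠ j}, v k)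
        ∧ max p (⨆ k : {k : Fin n // k ≠ i ∧ k ≠ j}, v k)
            ≤ ⨆ k : {k : Fin n // k ≠ i}, v k
      then ⨆ k : {k : Fin n // k ≠ i}, v k else v i)
    ≥ (if v i ≤ p ∧ p ≤ ⨆ k : {k : Fin n // k ≠ i}, v k
      then ⨆ k : {k : Fin n // k ≠ i}, v k else v i) :=
  second_price_with_reserve_dominates_general n v hv0 i j p
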